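/- For every block of L+2 consecutive indices {a, a+1, …, a+L+1} ⊆ {1,…,K}, the number of decoding pairs (i,j) ∈ D with both i and j in the block is at most N_c + 1. (Subnetwork-only uplink decoding cannot decode more than N_c + 1 words in a subnetwork of size L+2.) -/

import Mathlib

/-- MT `i` is connected to BS `j` iff `i - L ≤ j ≤ i` (truncated subtraction). -/
def Connected (L i j : ℕ) : Prop := i - L ≤ j ∧ j ≤ i

/-- `C` is a valid cell association for a `K`-user network with per-MT constraint `Nc`. -/
def IsCellAssoc (K Nc : ℕ) (C : ℕ → Finset ℕ) : Prop :=
  ∀ i ∈ Finset.Icc 1 K, C i ⊆ Finset.Icc 1 K ∧ (C i).card ≤ Nc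

/-- A combinatorial uplink zero-forcing scheme for the association `C`:
a finite set `D` of decoding pairs `(i, j)` (message `W i` decoded at BS `j`)
with a strict linear order `lt` on `D` such that
(a) every pair satisfies `j ∈ C i` and BS `j` is connected to MT `i`;
(b) distinct pairs differ in both coordinates;
(c) for pairs `(i,j), (i',j')` with `i ≠ i'`, if BS `j'` is connected to MT `i`
then `j' ∈ C i` and `(i,j)` precedes `(i',j')`. -/
structure UplinkScheme (K L : ℕ) (C : ℕ → Finset ℕ) where
  D : Finset (ℕ × ℕ)
  lt : ℕ × ℕ → ℕ × ℕ → Prop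
  lt_irrefl : ∀ p ∈ D, ¬ lt p p
  lt_trans : ∀ p ∈ D, ∀ q ∈ D, ∀ r ∈ D, lt p q → lt q r → lt p r
  lt_total : ∀ p ∈ D, ∀ q ∈ D, p ≠ q → lt p q ∨ lt q p
  mem_range : ∀ p ∈ D, p.1 ∈ Finset.Icc 1 K ∧ p.2 ∈ Finset.Icc 1 K
  assoc : ∀ p ∈ D, p.2 ∈ C p.1
  conn : ∀ p ∈ D, Connected L p.1 p.2
  distinct : ∀ p ∈ D, ∀ q ∈ D, p ≠ q → p.1 ≠ q.1 ∧ p.2 ≠ q.2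
  zf : ∀ p ∈ D, ∀ q ∈ D, p.1 ≠ q.1 → Connected L p.1 q.2 → q.2 ∈ C p.1 ∧ lt p q

/-- MT `i` is active in the uplink scheme: some pair `(i, j)` is in `D`. -/
def UplinkScheme.ActiveMT {K L : ℕ} {C : ℕ → Finset ℕ} (S : UplinkScheme K L C) (i : ℕ) : Prop :=
  i ∈ S.D.image Prod.fst

/-- BS `j` is active in the uplink scheme: some pair `(i, j)` is in `D`. -/
def UplinkScheme.ActiveBS {K L : ℕ} {C : ℕ → Finset ℕ} (S : UplinkScheme K L C) (j : ℕ) : Prop :=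
  j ∈ S.D.image Prod.snd

/-!
Let `(i, j)` be a decoding pair in the block whose MT index `i` is largest. Every other pair
`(i', j')` of the block has `j' ≤ i' ≤ i`, so either BS `j'` is connected to MT `i`, and then the
zero-forcing condition puts `j'` into `C i`, or `j' < i - L ≤ a + 1`, which leaves only `j' = a`.
Since distinct pairs use distinct base stations, the block has at most `|C i| + 1 ≤ N_c + 1` pairs.
-/

namespace UplinkScheme

variable {K L : ℕ} {C : ℕ → Finset ℕ} (S : UplinkScheme K L C)

theorem injOn_snd : Set.InjOn Prod.snd (S.D : Set (ℕ × ℕ)) := fun p hp q hq h =>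
  by_contra fun hpq => (S.distinct p hp q hq hpq).2 h

theorem card_image_snd {T : Finset (ℕ × ℕ)} (hT : T ⊆ S.D) :
    (T.image Prod.snd).card = T.card :=
  Finset.card_image_of_injOn (S.injOn_snd.mono hT)

theorem snd_mem_assoc_of_connected {p q : ℕ × ℕ} (hp : p ∈ S.D) (hq : q ∈ S.D)
    (hpq : Connected L p.1 q.2) : q.2 ∈ C p.1 := by
  by_cases h : q = p
  · exact h ▸ S.assoc q hq
  · exact (S.zf p hp q hq (S.distinct p hp q hq (Ne.symm h)).1 hpq).1

theorem snd_mem_assoc_or_lt {p q : ℕ × ℕ} (hp : p ∈ S.D) (hq : q ∈ S.D) (hle : q.1 ≤ p.1) :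
    q.2 ∈ C p.1 ∨ q.2 < p.1 - L := by
  by_cases hc : p.1 - L ≤ q.2
  · exact Or.inl (S.snd_mem_assoc_of_connected hp hq ⟨hc, (S.conn q hq).2.trans hle⟩)
  · exact Or.inr (not_le.mp hc)

theorem snd_mem_insert_assoc {a : ℕ} {p q : ℕ × ℕ} (hp : p ∈ S.D) (hq : q ∈ S.D)
    (hle : q.1 ≤ p.1) (hpa : p.1 ≤ a + L + 1) (haq : a ≤ q.2) : q.2 ∈ insert a (C p.1) := by
  rcases S.snd_mem_assoc_or_lt hp hq hle with h | h
  · exact Finset.mem_insert_of_mem h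
  · exact Finset.mem_insert.mpr (Or.inl (by omega))

end UplinkScheme

theorem subnetwork_only_decoding_bound_general (K L Nc : ℕ)
    (C : ℕ → Finset ℕ) (hC : IsCellAssoc K Nc C) (S : UplinkScheme K L C)
    (a : ℕ) :
    (S.D.filter (fun p => p.1 ∈ Finset.Icc a (a + L + 1) ∧ p.2 ∈ Finset.Icc a (a + L + 1))).card
      ≤ Nc + 1 := by
  set F := S.D.filter (fun p => p.1 ∈ Finset.Icc a (a + L + 1) ∧ p.2 ∈ Finset.Icc a (a + L + 1))
  rcases F.eq_empty_or_nonempty with hempty | hne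
  · simp [hempty]
  obtain ⟨p, hpF, hpmax⟩ := F.exists_max_image Prod.fst hne
  have hFD : F ⊆ S.D := Finset.filter_subset _ _
  have hsub : F.image Prod.snd ⊆ insert a (C p.1) := by
    refine Finset.image_subset_iff.mpr fun q hqF => ?_
    exact S.snd_mem_insert_assoc (hFD hpF) (hFD hqF) (hpmax q hqF)
      (Finset.mem_Icc.mp (Finset.mem_filter.mp hpF).2.1).2
      (Finset.mem_Icc.mp (Finset.mem_filter.mp hqF).2.2).1
  have hCp := (hC p.1 (S.mem_range p (hFD hpF)).1).2
  calc F.card = (F.image Prod.snd).card := (S.card_image_snd hFD).symm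
    _ ≤ (insert a (C p.1)).card := Finset.card_le_card hsub
    _ ≤ (C p.1).card + 1 := Finset.card_insert_le _ _
    _ ≤ Nc + 1 := by omega

/-- Subnetwork-only uplink decoding: for any block of `L + 2` consecutive indices
`{a, …, a + L + 1} ⊆ {1,…,K}`, at most `Nc + 1` messages with indices in the block
are decoded at base stations with indices in the block. -/
theorem subnetwork_only_decoding_bound (K L Nc : ℕ) (hK : 0 < K) (hL : 0 < L) (hNc : 0 < Nc)
    (C : ℕ → Finset ℕ) (hC : IsCellAssoc K Nc C) (S : UplinkScheme K L C)
    (a : ℕ) (ha : 1 ≤ a) (haK : a + L + 1 ≤ K) :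
    (S.D.filter (fun p => p.1 ∈ Finset.Icc a (a + L + 1) ∧ p.2 ∈ Finset.Icc a (a + L + 1))).card
      ≤ Nc + 1 :=
  subnetwork_only_decoding_bound_general K L Nc C hC S a
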